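/- arXiv:2305.11748 — 3 statements merged into one kernel-verified Lean document; each statement's English description precedes it below -/
import Mathlib

section
/- Let $G$ be a forest and $B \subseteq V(G)$ a set of blue vertices. For each blue vertex $a$ with at least two white neighbors (an active vertex), one can assign a connected component of $G - B$ containing a white neighbor of $a$, in such a way that distinct active vertices are assigned distinct components. -/
open SimpleGraph

namespace ZqGame

variable {V : Type*}

/-- A blue vertex `v` forces the white vertex `w`, where only white vertices in
`Wallow` are taken into account (used for Rule 3, where play is restricted to the
subgraph induced by the blue set together with the returned white components). -/
def ForceIn (G : SimpleGraph V) (B : Set V) (Wallow : Set V) (v w : V) : Prop :=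
  v ∈ B ∧ w ∉ B ∧ w ∈ Wallow ∧ G.Adj v w ∧
    ∀ u, G.Adj v u → u ∉ B → u ∈ Wallow → u = w

/-- The standard color change rule: `v` is blue and `w` is its unique white neighbor. -/
def Force (G : SimpleGraph V) (B : Set V) (v w : V) : Prop :=
  ForceIn G B Set.univ v w

/-- The white connected component of `G - B` containing the white vertex `w`. -/
def WhiteComp (G : SimpleGraph V) (B : Set V) (w : V) : Set V :=
  {x | Relation.ReflTransGen (fun a b => G.Adj a b ∧ a ∉ B ∧ b ∉ B) w x}

/-- `W` is a white component, i.e. a connected component of `G - B`. -/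
def IsWhiteComp (G : SimpleGraph V) (B : Set V) (W : Set V) : Prop :=
  ∃ w, w ∉ B ∧ W = WhiteComp G B w

/-- An active vertex: a blue vertex with at least two white neighbors. -/
def Active (G : SimpleGraph V) (B : Set V) (a : V) : Prop :=
  a ∈ B ∧ ∃ w₁ w₂, w₁ ≠ w₂ ∧ G.Adj a w₁ ∧ G.Adj a w₂ ∧ w₁ ∉ B ∧ w₂ ∉ B

end ZqGame

open SimpleGraph

/-
Root every tree of the forest at some vertex `r`. Of two white neighbours of an active vertex `a`,
at most one reaches `r` without passing through `a` (otherwise there is a cycle), so `a` has a white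
neighbour `w` below it, and we assign to `a` the white component of `w`. Since `a` is blue, every
vertex of that component lies below `a`. If two active vertices `a ≠ a'` received the same
component, each would lie below the other, so each would be strictly farther from `r` than the other.
-/

namespace SimpleGraph

variable {V : Type*} {G : SimpleGraph V}

def Separates (G : SimpleGraph V) (a x r : V) : Prop :=
  ∀ p : G.Walk x r, a ∈ p.support

theorem Separates.of_adj {a v x r : V} (h : G.Separates a v r) (hvx : G.Adj v x) (hva : v ≠ a) :
    G.Separates a x r := fun p => by
  simpa [hva.symm] using h (.cons hvx p)

theorem Separates.dist_lt {a x r : V} (h : G.Separates a x r) (hxr : G.Reachable x r)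
    (hax : a ≠ x) : G.dist a r < G.dist x r := by
  classical
  obtain ⟨p, hp⟩ := hxr.exists_walk_length_eq_dist
  have hap := h p
  have htake : (p.takeUntil a hap).length ≠ 0 := fun h0 => hax (Walk.eq_of_length_eq_zero h0).symm
  calc G.dist a r ≤ (p.dropUntil a hap).length := dist_le _
    _ < (p.takeUntil a hap).length + (p.dropUntil a hap).length := by omega
    _ = G.dist x r := by rw [← Walk.length_append, Walk.take_spec, hp]

theorem IsAcyclic.eq_of_adj_of_walk_avoiding {a w₁ w₂ : V} (hF : G.IsAcyclic) (h₁ : G.Adj a w₁)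
    (h₂ : G.Adj a w₂) (p : G.Walk w₁ w₂) (hp : a ∉ p.support) : w₁ = w₂ := by
  have hbridge := isBridge_iff_forall_walk_mem_edges.mp
    (isAcyclic_iff_forall_adj_isBridge.mp hF h₁.symm) (p.concat h₂.symm)
  rw [Walk.edges_concat, List.concat_eq_append, List.mem_append, List.mem_singleton] at hbridge
  rcases hbridge with hmem | hedge
  · exact absurd (p.snd_mem_support_of_mem_edges hmem) hp
  · exact Sym2.congr_left.mp hedge

theorem IsAcyclic.separates_or_separates {a w₁ w₂ : V} (hF : G.IsAcyclic) (h₁ : G.Adj a w₁)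
    (h₂ : G.Adj a w₂) (hne : w₁ ≠ w₂) (r : V) : G.Separates a w₁ r ∨ G.Separates a w₂ r := by
  by_contra! h
  simp only [Separates, not_forall] at h
  obtain ⟨⟨p₁, hp₁⟩, ⟨p₂, hp₂⟩⟩ := h
  refine hne (hF.eq_of_adj_of_walk_avoiding h₁ h₂ (p₁.append p₂.reverse) ?_)
  simp [Walk.mem_support_append_iff, hp₁, hp₂]

end SimpleGraph

namespace ZqGame

variable {V : Type*} {G : SimpleGraph V} {B : Set V}

theorem mem_whiteComp_self (w : V) : w ∈ WhiteComp G B w :=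
  Relation.ReflTransGen.refl

theorem reachable_of_mem_whiteComp {w x : V} (hx : x ∈ WhiteComp G B w) : G.Reachable w x :=
  (reachable_iff_reflTransGen _ _).mpr (Relation.ReflTransGen.mono (fun _ _ h => h.1) _ _ hx)

theorem _root_.SimpleGraph.Separates.of_mem_whiteComp {a w x r : V} (h : G.Separates a w r)
    (ha : a ∈ B) (hx : x ∈ WhiteComp G B w) : G.Separates a x r := by
  induction hx with
  | refl => exact h
  | tail _ hyz ih => exact ih.of_adj hyz.1 fun hya => hyz.2.1 (hya ▸ ha)

theorem Active.exists_adj_separates (hF : G.IsAcyclic) {a : V} (ha : Active G B a) (r : V) :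
    ∃ w, w ∉ B ∧ G.Adj a w ∧ G.Separates a w r := by
  obtain ⟨-, w₁, w₂, hne, h₁, h₂, hw₁, hw₂⟩ := ha
  rcases hF.separates_or_separates h₁ h₂ hne r with h | h
  exacts [⟨w₁, hw₁, h₁, h⟩, ⟨w₂, hw₂, h₂, h⟩]

theorem eq_of_whiteComp_eq {a a' w w' r : V} (ha : a ∈ B) (ha' : a' ∈ B) (hw : w ∉ B)
    (hw' : w' ∉ B) (hadj : G.Adj a w) (hadj' : G.Adj a' w') (hsep : G.Separates a w r)
    (hsep' : G.Separates a' w' r) (hr : G.Reachable a r) (hr' : G.Reachable a' r)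
    (hcomp : WhiteComp G B w = WhiteComp G B w') : a = a' := by
  by_contra hne
  have hw'_mem : w' ∈ WhiteComp G B w := hcomp ▸ mem_whiteComp_self w'
  have hw_mem : w ∈ WhiteComp G B w' := hcomp ▸ mem_whiteComp_self w
  have h : G.Separates a a' r :=
    (hsep.of_mem_whiteComp ha hw'_mem).of_adj hadj'.symm fun h => hw' (h ▸ ha)
  have h' : G.Separates a' a r :=
    (hsep'.of_mem_whiteComp ha' hw_mem).of_adj hadj.symm fun h => hw (h ▸ ha')
  exact lt_asymm (h.dist_lt hr' hne) (h'.dist_lt hr (Ne.symm hne))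

end ZqGame

/-- Let `G` be a forest with blue set `B`. Then there is an assignment `Φ` of white
components to active vertices such that each active vertex `a` is assigned a white
component of `G - B` containing a (white) neighbor of `a`, and distinct active
vertices are assigned distinct components. -/
theorem forest_active_component_assignment {V : Type*} (G : SimpleGraph V)
    (hF : G.IsAcyclic) (B : Set V) :
    ∃ Φ : V → Set V,
      (∀ a, ZqGame.Active G B a →
        ZqGame.IsWhiteComp G B (Φ a) ∧ ∃ w, w ∈ Φ a ∧ w ∉ B ∧ G.Adj a w) ∧
      (∀ a a', ZqGame.Active G B a → ZqGame.Active G B a' → a ≠ a' → Φ a ≠ Φ a') := by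
  classical
  let root (a : V) : V := (G.connectedComponentMk a).out
  have reachable_root (a : V) : G.Reachable a (root a) :=
    (ConnectedComponent.exact (G.connectedComponentMk a).out_eq).symm
  choose w hwB hadj hsep using
    fun a (ha : ZqGame.Active G B a) => ha.exists_adj_separates hF (root a)
  refine ⟨fun a => if ha : ZqGame.Active G B a then ZqGame.WhiteComp G B (w a ha) else ∅,
    fun a ha => ?_, fun a a' ha ha' hne hΦ => ?_⟩
  · simp only [dif_pos ha]
    exact ⟨⟨w a ha, hwB a ha, rfl⟩, w a ha, ZqGame.mem_whiteComp_self _, hwB a ha, hadj a ha⟩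
  · simp only [dif_pos ha, dif_pos ha'] at hΦ
    have hroot : root a = root a' := congrArg Quot.out <| ConnectedComponent.sound <|
      (hadj a ha).reachable.trans <| (ZqGame.reachable_of_mem_whiteComp
        (hΦ ▸ ZqGame.mem_whiteComp_self (w a' ha'))).trans (hadj a' ha').reachable.symm
    exact hne (ZqGame.eq_of_whiteComp_eq ha.1 ha'.1 (hwB a ha) (hwB a' ha') (hadj a ha)
      (hadj a' ha') (hsep a ha) (hroot ▸ hsep a' ha') (reachable_root a) (hroot ▸ reachable_root a') hΦ)
end

section
/- Let $G$ be a forest, $B \subseteq V(G)$, and let $A$ be a nonempty set of blue vertices each having at least two white neighbors. Suppose each $a \in A$ is assigned a distinct white component $W_a$ of $G - B$ containing a white child of $a$ (with respect to rooting each tree of $G$ at an active vertex it contains). Then for any nonempty subset $S \subseteq A$, there exists $a \in S$ that has exactly one white neighbor in the induced subgraph $G[B \cup \bigcup_{a' \in S} W_{a'}]$. -/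
open SimpleGraph

open SimpleGraph

/-!
Let `a ∈ S` be a vertex of least depth. If a neighbor `u` of `a` lies in the component `W a'`,
then the blue vertex `a'` separates `W a'` from the root, so `a'` lies on the root path of `a`
extended by the edge to `u`; as `u` is white, `a'` lies on the root path of `a` itself, and
minimality of depth forces `a' = a`. Finally, in a forest a blue vertex has at most one
neighbor in each white component.
-/

namespace SimpleGraph

variable {V : Type*} {G : SimpleGraph V} {u v x : V}

theorem Walk.eq_of_mem_support_of_dist_le {p : G.Walk u v} (hp : p.length = G.dist u v)
    (hx : x ∈ p.support) (h : G.dist u v ≤ G.dist u x) : x = v := by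
  classical
  have hsplit := congrArg Walk.length (p.take_spec hx)
  rw [Walk.length_append] at hsplit
  have := G.dist_le (p.takeUntil x hx)
  exact Walk.eq_of_length_eq_zero (p := p.dropUntil x hx) (by omega)

theorem IsAcyclic.support_subset_support (hF : G.IsAcyclic) {p : G.Walk u v} (hp : p.IsPath)
    (q : G.Walk u v) : p.support ⊆ q.support := by
  classical
  have : q.bypass = p :=
    congrArg Subtype.val ((hF.subsingleton_path u v).elim ⟨_, q.bypass_isPath⟩ ⟨p, hp⟩)
  exact this ▸ q.support_bypass_subset_support

theorem IsAcyclic.mem_support_of_adj_of_dist_eq_succ (hF : G.IsAcyclic) {r a w : V}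
    (hadj : G.Adj a w) (hd : G.dist r w = G.dist r a + 1) (q : G.Walk r w) :
    a ∈ q.support := by
  obtain ⟨p, hp⟩ := (q.reachable.trans hadj.symm.reachable).exists_walk_length_eq_dist
  have hpath : (p.concat hadj).IsPath :=
    (p.concat hadj).isPath_of_length_eq_dist (by rw [Walk.length_concat, hp, hd])
  apply hF.support_subset_support hpath q
  rw [Walk.support_concat]
  exact List.mem_append_left _ p.end_mem_support

end SimpleGraph

namespace ZqGame

variable {V : Type*} {G : SimpleGraph V} {B W : Set V} {x y : V}

theorem exists_walk_of_mem_whiteComp (hx : x ∉ B) (hy : y ∈ WhiteComp G B x) :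
    ∃ p : G.Walk x y, ∀ z ∈ p.support, z ∉ B := by
  induction hy with
  | refl => exact ⟨Walk.nil, by simpa using hx⟩
  | tail _ hstep ih =>
    obtain ⟨p, hp⟩ := ih
    obtain ⟨hadj, -, hc⟩ := hstep
    refine ⟨p.concat hadj, fun z hz => ?_⟩
    rw [Walk.support_concat, List.mem_append, List.mem_singleton] at hz
    rcases hz with hz | rfl
    · exact hp z hz
    · exact hc

theorem IsWhiteComp.exists_walk (hW : IsWhiteComp G B W) (hx : x ∈ W) (hy : y ∈ W) :
    ∃ p : G.Walk x y, ∀ z ∈ p.support, z ∉ B := by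
  obtain ⟨w, hw, rfl⟩ := hW
  obtain ⟨px, hpx⟩ := exists_walk_of_mem_whiteComp hw hx
  obtain ⟨py, hpy⟩ := exists_walk_of_mem_whiteComp hw hy
  refine ⟨px.reverse.append py, fun z hz => ?_⟩
  rw [Walk.mem_support_append_iff, Walk.support_reverse, List.mem_reverse] at hz
  exact hz.elim (hpx z) (hpy z)

theorem IsWhiteComp.eq_of_adj (hF : G.IsAcyclic) (hW : IsWhiteComp G B W) {a u w : V}
    (ha : a ∈ B) (hu : u ∈ W) (hw : w ∈ W) (hau : G.Adj a u) (haw : G.Adj a w) : u = w := by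
  by_contra hne
  obtain ⟨q, hq⟩ := hW.exists_walk hu hw
  have hpath : (Walk.cons hau.symm (Walk.cons haw Walk.nil)).IsPath := by
    simp [Walk.cons_isPath_iff, hau.ne.symm, haw.ne, hne]
  exact hq a (hF.support_subset_support hpath q (by simp)) ha

theorem IsWhiteComp.eq_of_adj_of_dist_le (hF : G.IsAcyclic) (hW : IsWhiteComp G B W)
    {r a a' u w' : V} (hra : G.Reachable r a) (hau : G.Adj a u) (hu : u ∈ W) (ha' : a' ∈ B)
    (ha'w' : G.Adj a' w') (hw' : w' ∈ W) (hd : G.dist r w' = G.dist r a' + 1)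
    (hle : G.dist r a ≤ G.dist r a') : a' = a := by
  obtain ⟨s, hs⟩ := hW.exists_walk hu hw'
  obtain ⟨p, hp⟩ := hra.exists_walk_length_eq_dist
  have hmem := hF.mem_support_of_adj_of_dist_eq_succ ha'w' hd ((p.concat hau).append s)
  rw [Walk.mem_support_append_iff, Walk.support_concat, List.mem_append,
    List.mem_singleton] at hmem
  have ha'p : a' ∈ p.support := by
    rcases hmem with (h | rfl) | h
    · exact h
    · exact absurd ha' (hs _ s.start_mem_support)
    · exact absurd ha' (hs _ h)
  exact p.eq_of_mem_support_of_dist_le hp ha'p hle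

end ZqGame

theorem forest_rule3_force_general {V : Type*} (G : SimpleGraph V) (hF : G.IsAcyclic)
    (B : Set V) (A : Set V)
    (hAact : ∀ a ∈ A, ZqGame.Active G B a)
    (root : V → V)
    (hroot_reach : ∀ v, G.Reachable v (root v))
    (hroot_const : ∀ v w, G.Reachable v w → root v = root w)
    (W : V → Set V)
    (hWcomp : ∀ a ∈ A, ZqGame.IsWhiteComp G B (W a))
    (hWchild : ∀ a ∈ A, ∃ w, w ∈ W a ∧ w ∉ B ∧ G.Adj a w ∧
      G.dist (root a) w = G.dist (root a) a + 1) :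
    ∀ S ⊆ A, S.Nonempty →
      ∃ a ∈ S, ∃! w, G.Adj a w ∧ w ∈ ⋃ a' ∈ S, W a' := by
  intro S hSA hS
  let depth : V → ℕ := fun v => G.dist (root v) v
  obtain ⟨a, haS, hmin⟩ : ∃ a ∈ S, ∀ b ∈ S, depth a ≤ depth b :=
    ⟨_, Function.argminOn_mem depth S hS, fun b hb => Function.argminOn_le depth S hb⟩
  have haA := hSA haS
  obtain ⟨w, hwW, -, haw, -⟩ := hWchild a haA
  refine ⟨a, haS, w, ⟨haw, Set.mem_biUnion haS hwW⟩, ?_⟩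
  rintro u ⟨hau, hu⟩
  obtain ⟨a', ha'S, hu'⟩ := Set.mem_iUnion₂.1 hu
  have ha'A := hSA ha'S
  obtain ⟨w', hw'W, -, ha'w', hd⟩ := hWchild a' ha'A
  obtain ⟨s, -⟩ := (hWcomp a' ha'A).exists_walk hu' hw'W
  have hroot : root a' = root a :=
    hroot_const _ _ (ha'w'.reachable.trans (s.reachable.symm.trans hau.reachable.symm))
  rw [hroot] at hd
  obtain rfl : a' = a := (hWcomp a' ha'A).eq_of_adj_of_dist_le hF (hroot_reach a).symm hau hu'
    (hAact a' ha'A).1 ha'w' hw'W hd (by simpa only [depth, hroot] using hmin a' ha'S)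
  exact (hWcomp a' ha'A).eq_of_adj hF (hAact a' ha'A).1 hu' hwW hau haw

/-- Let `G` be a forest, `B` a blue set, `A` a nonempty set of active vertices, and
`root` a choice of root for each connected component (constant on components, and an
active vertex on components containing a vertex of `A`). Suppose each `a ∈ A` is
assigned a distinct white component `W a` containing a white child of `a` (a white
neighbor one step further from the root). Then for any nonempty `S ⊆ A` that White
may return, some `a ∈ S` has exactly one white neighbor in the subgraph induced by
`B` together with the components `W a'` for `a' ∈ S`, so Blue can perform a force. -/
theorem forest_rule3_force {V : Type*} (G : SimpleGraph V) (hF : G.IsAcyclic)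
    (B : Set V) (A : Set V) (hA : A.Nonempty)
    (hAact : ∀ a ∈ A, ZqGame.Active G B a)
    (root : V → V)
    (hroot_reach : ∀ v, G.Reachable v (root v))
    (hroot_const : ∀ v w, G.Reachable v w → root v = root w)
    (hroot_active : ∀ a ∈ A, ZqGame.Active G B (root a))
    (W : V → Set V)
    (hWcomp : ∀ a ∈ A, ZqGame.IsWhiteComp G B (W a))
    (hWchild : ∀ a ∈ A, ∃ w, w ∈ W a ∧ w ∉ B ∧ G.Adj a w ∧
      G.dist (root a) w = G.dist (root a) a + 1)
    (hWinj : ∀ a ∈ A, ∀ a' ∈ A, a ≠ a' → W a ≠ W a') :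
    ∀ S ⊆ A, S.Nonempty →
      ∃ a ∈ S, ∃! w, G.Adj a w ∧ w ∈ ⋃ a' ∈ S, W a' :=
  forest_rule3_force_general G hF B A hAact root hroot_reach hroot_const W hWcomp hWchild
end

section
/- Let $C_{n,k}$ (with $k \ge 2$, $n \ge 3$) be any graph obtained from the cycle $C_n$ by attaching between $2$ and $k$ pendant leaves to each cycle vertex. Then $\operatorname{Z}_2(C_{n,k}) \ge \log_2(n) + 1$. -/
open SimpleGraph

namespace ZqGame

variable {V : Type*}

/-- `Win G q B t` : in the `Z_q`-forcing game on `G` starting from blue set `B`,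
Blue has a strategy spending at most `t` tokens that colors every vertex blue
against any (adversarial) play by White.
* `all` : every vertex is already blue.
* `rule1` : spend one token to color an arbitrary vertex blue.
* `rule2` : a blue vertex with exactly one white neighbor forces it, for free.
* `rule3` : Blue announces a collection `𝒲` of at least `q + 1` white components;
  for every nonempty sub-collection `𝒮` that White may return, Blue can perform a
  Rule 2 force (`vf 𝒮 → wf 𝒮`) on the subgraph induced by `B` together with `⋃ 𝒮`,
  and continue from the resulting position. -/
inductive Win (G : SimpleGraph V) (q : ℕ) : Set V → ℕ → Prop
  | all (B : Set V) (t : ℕ) : (∀ v, v ∈ B) → Win G q B t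
  | rule1 (B : Set V) (t : ℕ) (v : V) : Win G q (insert v B) t → Win G q B (t + 1)
  | rule2 (B : Set V) (t : ℕ) (v w : V) :
      Force G B v w → Win G q (insert w B) t → Win G q B t
  | rule3 (B : Set V) (t : ℕ) (𝒲 : Finset (Set V))
      (vf wf : Finset (Set V) → V) :
      (∀ W ∈ 𝒲, IsWhiteComp G B W) → q + 1 ≤ 𝒲.card →
      (∀ 𝒮 : Finset (Set V), 𝒮 ⊆ 𝒲 → 𝒮.Nonempty →
        ForceIn G B (⋃₀ (𝒮 : Set (Set V))) (vf 𝒮) (wf 𝒮)) →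
      (∀ 𝒮 : Finset (Set V), 𝒮 ⊆ 𝒲 → 𝒮.Nonempty →
        Win G q (insert (wf 𝒮) B) t) →
      Win G q B t

/-- `Z_q(G, B)` : the minimum number of additional tokens Blue must spend to win the
`Z_q`-forcing game on `G` starting from blue set `B`. -/
noncomputable def cost (G : SimpleGraph V) (q : ℕ) (B : Set V) : ℕ :=
  sInf {t | Win G q B t}

/-- `Z_q(G)` : the `Z_q`-forcing number of `G`. -/
noncomputable def Zq (G : SimpleGraph V) (q : ℕ) : ℕ := cost G q ∅

end ZqGame

namespace ZqGame

/-- Vertex type of a caterpillar cycle: `Sum.inl i` is the `i`-th center (cycle) vertex,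
and `Sum.inr ⟨i, j⟩` is the `j`-th pendant leaf attached to center `i`, where center `i`
has `f i` pendant leaves. -/
abbrev CatVert (n : ℕ) (f : Fin n → ℕ) : Type := Fin n ⊕ (Σ i : Fin n, Fin (f i))

/-- The caterpillar cycle obtained from the cycle `C_n` by attaching `f i` pendant
leaves to the `i`-th cycle vertex. -/
def catCycle (n : ℕ) (f : Fin n → ℕ) : SimpleGraph (CatVert n f) :=
  SimpleGraph.fromRel (fun x y =>
    match x, y with
    | Sum.inl i, Sum.inl j => ((i : ℕ) + 1) % n = (j : ℕ)
    | Sum.inl i, Sum.inr l => i = l.1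
    | _, _ => False)

end ZqGame

open SimpleGraph

namespace ZqGame
namespace CatLower

open Sum

/-! ### Generic lemmas about white components and winning -/

section Generic

variable {V : Type*} {G : SimpleGraph V} {B : Set V}

lemma whiteComp_refl (G : SimpleGraph V) (B : Set V) (x : V) : x ∈ WhiteComp G B x :=
  Relation.ReflTransGen.refl

lemma whiteComp_white {w x : V} (hw : w ∉ B) (hx : x ∈ WhiteComp G B w) : x ∉ B := by
  induction hx with
  | refl => exact hw
  | tail _ h _ => exact h.2.2

lemma whiteComp_mem_symm {w x : V} (hx : x ∈ WhiteComp G B w) : w ∈ WhiteComp G B x := by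
  induction hx with
  | refl => exact Relation.ReflTransGen.refl
  | tail _ h ih => exact (Relation.ReflTransGen.single ⟨h.1.symm, h.2.2, h.2.1⟩).trans ih

lemma whiteComp_eq_of_mem {w x : V} (hx : x ∈ WhiteComp G B w) :
    WhiteComp G B x = WhiteComp G B w := by
  ext y
  constructor
  · intro hy
    exact Relation.ReflTransGen.trans hx hy
  · intro hy
    exact Relation.ReflTransGen.trans (whiteComp_mem_symm hx) hy

lemma whiteComp_eq_of_adj {x y : V} (h : G.Adj x y) (hx : x ∉ B) (hy : y ∉ B) :
    WhiteComp G B x = WhiteComp G B y :=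
  whiteComp_eq_of_mem (Relation.ReflTransGen.single ⟨h.symm, hy, hx⟩)

lemma whiteComp_singleton {x : V} (h : ∀ u, G.Adj x u → u ∈ B) :
    WhiteComp G B x = {x} := by
  ext y
  simp only [Set.mem_singleton_iff]
  constructor
  · intro hy
    rcases Relation.ReflTransGen.cases_head hy with h0 | ⟨c, hc, _⟩
    · exact h0.symm
    · exact absurd (h c hc.1) hc.2.2
  · rintro rfl
    exact Relation.ReflTransGen.refl

lemma winAll (G : SimpleGraph V) (q : ℕ) : ∀ (F : Finset V) (B : Set V),
    (∀ v, v ∉ F → v ∈ B) → Win G q B F.card := by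
  classical
  intro F
  induction F using Finset.induction_on with
  | empty => exact fun B hB => Win.all B 0 fun v => hB v (Finset.notMem_empty v)
  | @insert a F ha ih =>
    intro B hB
    rw [Finset.card_insert_of_notMem ha]
    refine Win.rule1 B _ a (ih (insert a B) ?_)
    intro v hv
    by_cases hva : v = a
    · exact hva ▸ Set.mem_insert a B
    · exact Set.mem_insert_of_mem a (hB v (by simp [hva, hv]))

lemma three_distinct {α : Type*} [DecidableEq α] {s : Finset α} (h : 3 ≤ s.card) :
    ∃ a ∈ s, ∃ b ∈ s, ∃ c ∈ s, a ≠ b ∧ a ≠ c ∧ b ≠ c := by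
  obtain ⟨a, ha⟩ := (Finset.card_pos (s := s)).mp (by omega)
  have h2 : 0 < (s.erase a).card := by rw [Finset.card_erase_of_mem ha]; omega
  obtain ⟨b, hb⟩ := Finset.card_pos.mp h2
  have h3 : 0 < ((s.erase a).erase b).card := by
    rw [Finset.card_erase_of_mem hb, Finset.card_erase_of_mem ha]; omega
  obtain ⟨c, hc⟩ := Finset.card_pos.mp h3
  refine ⟨a, ha, b, Finset.mem_of_mem_erase hb, c,
    Finset.mem_of_mem_erase (Finset.mem_of_mem_erase hc), ?_, ?_, ?_⟩
  · exact (Finset.ne_of_mem_erase hb).symm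
  · exact (Finset.ne_of_mem_erase (Finset.mem_of_mem_erase hc)).symm
  · exact (Finset.ne_of_mem_erase hc).symm

end Generic

/-! ### The caterpillar cycle -/

variable {n : ℕ} {f : Fin n → ℕ}

/-- The `m`-th center after `s` on the cycle. -/
def idx (s : Fin n) (m : ℕ) : Fin n := ⟨(s.val + m) % n, Nat.mod_lt _ s.pos⟩

lemma idx_val (s : Fin n) (m : ℕ) : (idx s m).val = (s.val + m) % n := rfl

lemma idx_zero (s : Fin n) : idx s 0 = s := by
  apply Fin.ext
  simp [idx_val, Nat.mod_eq_of_lt s.isLt]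

lemma idx_idx (s : Fin n) (a m : ℕ) : idx (idx s a) m = idx s (a + m) := by
  apply Fin.ext
  simp only [idx_val]
  rw [Nat.mod_add_mod, Nat.add_assoc]

lemma idx_add_n (s : Fin n) (m : ℕ) : idx s (m + n) = idx s m := by
  apply Fin.ext
  simp only [idx_val]
  rw [← Nat.add_assoc, Nat.add_mod_right]

lemma idx_inj {s : Fin n} {m m' : ℕ} (hm : m < n) (hm' : m' < n)
    (h : idx s m = idx s m') : m = m' := by
  have h1 : (s.val + m) % n = (s.val + m') % n := congrArg Fin.val h
  have h2 : m % n = m' % n := Nat.ModEq.add_left_cancel' s.val h1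
  rwa [Nat.mod_eq_of_lt hm, Nat.mod_eq_of_lt hm'] at h2

/-- The center of a vertex. -/
def ctr : CatVert n f → Fin n
  | inl i => i
  | inr l => l.1

lemma adj_leaf' (i : Fin n) (j : Fin (f i)) :
    (catCycle n f).Adj (inl i) (inr ⟨i, j⟩) := by
  rw [catCycle, SimpleGraph.fromRel_adj]
  exact ⟨by simp, Or.inl rfl⟩

lemma eq_center_of_adj_inr {x : CatVert n f} {l : Σ i : Fin n, Fin (f i)}
    (h : (catCycle n f).Adj x (inr l)) : x = inl l.1 := by
  rw [catCycle, SimpleGraph.fromRel_adj] at h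
  cases x with
  | inl i =>
    rcases h.2 with h' | h'
    · exact congrArg Sum.inl h'
    · exact h'.elim
  | inr l' => rcases h.2 with h' | h' <;> exact h'.elim

lemma adj_succ (hn1 : 1 < n) (s : Fin n) (m : ℕ) :
    (catCycle n f).Adj (inl (idx s m)) (inl (idx s (m + 1))) := by
  have hval : ((idx s m).val + 1) % n = (idx s (m + 1)).val := by
    simp only [idx_val]
    rw [Nat.mod_add_mod, Nat.add_assoc]
  have hne : idx s m ≠ idx s (m + 1) := by
    intro h
    have h1 : ((idx s m).val + 1) % n = (idx s m).val := by rw [hval, h]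
    have h2 : (idx s m).val < n := (idx s m).isLt
    rcases Nat.lt_or_ge ((idx s m).val + 1) n with hlt | hge
    · rw [Nat.mod_eq_of_lt hlt] at h1; omega
    · have : (idx s m).val + 1 = n := by omega
      rw [this, Nat.mod_self] at h1
      omega
  rw [catCycle, SimpleGraph.fromRel_adj]
  exact ⟨by simpa using hne, Or.inl hval⟩

lemma adj_inl_cases (hn1 : 1 < n) {a b : Fin n}
    (h : (catCycle n f).Adj (inl a) (inl b)) : b = idx a 1 ∨ b = idx a (n - 1) := by
  have h2 : ((a : ℕ) + 1) % n = (b : ℕ) ∨ ((b : ℕ) + 1) % n = (a : ℕ) := by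
    rw [catCycle, SimpleGraph.fromRel_adj] at h
    exact h.2
  rcases h2 with h2 | h2
  · left
    apply Fin.ext
    rw [← h2, idx_val]
  · right
    apply Fin.ext
    rw [idx_val, ← h2, Nat.mod_add_mod]
    have : b.val + 1 + (n - 1) = b.val + n := by omega
    rw [this, Nat.add_mod_right, Nat.mod_eq_of_lt b.isLt]

end CatLower
end ZqGame

namespace ZqGame
namespace CatLower

open Sum

variable {n : ℕ} {f : Fin n → ℕ}

/-- Center `i` has at least two white leaves. -/
def Cond1 (B : Set (CatVert n f)) (i : Fin n) : Prop :=
  ∃ j j' : Fin (f i), j ≠ j' ∧ (inr ⟨i, j⟩ : CatVert n f) ∉ B ∧ (inr ⟨i, j'⟩ : CatVert n f) ∉ B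

/-- Center `i` is white and all its leaves are white. -/
def Fresh (B : Set (CatVert n f)) (i : Fin n) : Prop :=
  (inl i : CatVert n f) ∉ B ∧ ∀ j : Fin (f i), (inr ⟨i, j⟩ : CatVert n f) ∉ B

/-- A protected arc of `L` consecutive centers starting at `s`: every center has at
least two white leaves, and all non-endpoint centers are fresh. -/
def ArcOK (B : Set (CatVert n f)) (s : Fin n) (L : ℕ) : Prop :=
  L ≤ n ∧ (∀ m, m < L → Cond1 B (idx s m)) ∧
    (∀ m, 0 < m → m + 1 < L → Fresh B (idx s m))

/-- Coloring `v` does not affect the arc `(s, L)`. -/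
def Safe (s : Fin n) (L : ℕ) (v : CatVert n f) : Prop :=
  (∀ m, m < L → ∀ j : Fin (f (idx s m)), v ≠ inr ⟨idx s m, j⟩) ∧
    (∀ m, 0 < m → m + 1 < L → v ≠ inl (idx s m))

lemma fresh_mono {B : Set (CatVert n f)} {i : Fin n} (hf2 : 2 ≤ f i) (h : Fresh B i) :
    Cond1 B i :=
  ⟨⟨0, by omega⟩, ⟨1, by omega⟩, by simp [Fin.ext_iff], h.2 _, h.2 _⟩

lemma preserve {B : Set (CatVert n f)} {s : Fin n} {L : ℕ} {v : CatVert n f}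
    (hA : ArcOK B s L) (hS : Safe s L v) : ArcOK (insert v B) s L := by
  obtain ⟨hLn, hc, hi⟩ := hA
  have hmem : ∀ (x : CatVert n f), x ∉ B → v ≠ x → x ∉ insert v B := by
    intro x hx hvx h
    rcases Set.mem_insert_iff.mp h with h | h
    · exact hvx h.symm
    · exact hx h
  refine ⟨hLn, fun m hm => ?_, fun m h0 h1 => ?_⟩
  · obtain ⟨j, j', hjj, hj, hj'⟩ := hc m hm
    exact ⟨j, j', hjj, hmem _ hj (hS.1 m hm j), hmem _ hj' (hS.1 m hm j')⟩
  · obtain ⟨hct, hlv⟩ := hi m h0 h1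
    exact ⟨hmem _ hct (hS.2 m h0 h1), fun j => hmem _ (hlv j) (hS.1 m (by omega) j)⟩

lemma safe_or_unsafe (s : Fin n) (L : ℕ) (v : CatVert n f) :
    Safe s L v ∨
      (∃ m, m < L ∧ ∃ l : Σ i : Fin n, Fin (f i), v = inr l ∧ l.1 = idx s m) ∨
      (∃ m, 0 < m ∧ m + 1 < L ∧ v = inl (idx s m)) := by
  cases v with
  | inl i =>
    by_cases h : ∃ m, 0 < m ∧ m + 1 < L ∧ i = idx s m
    · obtain ⟨m, h0, h1, rfl⟩ := h
      exact Or.inr (Or.inr ⟨m, h0, h1, rfl⟩)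
    · left
      constructor
      · intro m _ j heq
        exact Sum.inl_ne_inr heq
      · intro m h0 h1 hC
        exact h ⟨m, h0, h1, Sum.inl.inj hC⟩
  | inr l =>
    by_cases h : ∃ m, m < L ∧ l.1 = idx s m
    · obtain ⟨m, hm, hl⟩ := h
      exact Or.inr (Or.inl ⟨m, hm, l, rfl, hl⟩)
    · left
      constructor
      · intro m hm j hC
        apply h
        refine ⟨m, hm, ?_⟩
        have := Sum.inr.inj hC
        exact congrArg Sigma.fst this
      · intro m _ _ hC
        exact Sum.inr_ne_inl hC

lemma subarc {B : Set (CatVert n f)} {s : Fin n} {L : ℕ} (hA : ArcOK B s L)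
    (a L' : ℕ) (h : a + L' ≤ L) : ArcOK B (idx s a) L' := by
  obtain ⟨hLn, hc, hi⟩ := hA
  refine ⟨by omega, fun m hm => ?_, fun m h0 h1 => ?_⟩
  · rw [idx_idx]
    exact hc (a + m) (by omega)
  · rw [idx_idx]
    exact hi (a + m) (by omega) (by omega)

lemma step1 {B : Set (CatVert n f)} {s : Fin n} {L : ℕ} (hA : ArcOK B s L)
    (v : CatVert n f) :
    ∃ s' L', ArcOK (insert v B) s' L' ∧ L ≤ 2 * L' + 1 := by
  have hLn := hA.1
  by_cases hm : ∃ m, m < L ∧ ctr v = idx s m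
  · obtain ⟨m₀, hm₀, hcv⟩ := hm
    have key : ∀ m, m < L → m ≠ m₀ → ∀ (x : CatVert n f), ctr x = idx s m → v ≠ x := by
      intro m hmL hne x hx hvx
      rw [hvx, hx] at hcv
      exact hne (idx_inj (by omega) (by omega) hcv)
    rcases le_or_gt (L - 1 - m₀) m₀ with hcmp | hcmp
    · refine ⟨s, m₀, ?_, by omega⟩
      have h1 : ArcOK B s m₀ := by
        have := subarc hA 0 m₀ (by omega)
        rwa [idx_zero] at this
      refine preserve h1 ⟨fun m hm j => key m (by omega) (by omega) _ rfl,
        fun m h0 h1' => key m (by omega) (by omega) _ rfl⟩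
    · refine ⟨idx s (m₀ + 1), L - 1 - m₀, ?_, by omega⟩
      have h1 : ArcOK B (idx s (m₀ + 1)) (L - 1 - m₀) := subarc hA (m₀ + 1) _ (by omega)
      refine preserve h1 ⟨fun m hm j => ?_, fun m h0 h1' => ?_⟩
      · exact key (m₀ + 1 + m) (by omega) (by omega) _
          (show idx (idx s (m₀ + 1)) m = _ by rw [idx_idx])
      · exact key (m₀ + 1 + m) (by omega) (by omega) _
          (show idx (idx s (m₀ + 1)) m = _ by rw [idx_idx])
  · push_neg at hm
    refine ⟨s, L, preserve hA ⟨fun m hmL j hC => ?_, fun m h0 h1 hC => ?_⟩, by omega⟩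
    · exact hm m hmL (by rw [hC]; rfl)
    · exact hm m (by omega) (by rw [hC]; rfl)

end CatLower
end ZqGame

namespace ZqGame
namespace CatLower

open Sum

variable {n : ℕ} {f : Fin n → ℕ}

lemma step2 (hn1 : 1 < n) {B : Set (CatVert n f)} {v w : CatVert n f} {s : Fin n} {L : ℕ}
    (hF : Force (catCycle n f) B v w) (hA : ArcOK B s L) :
    ArcOK (insert w B) s L := by
  rcases safe_or_unsafe s L w with hS | hU | hU
  · exact preserve hA hS
  · -- the forced vertex is a leaf of an arc center: impossible
    exfalso
    obtain ⟨m₀, hm₀, l, hwf, hl⟩ := hU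
    obtain ⟨hvB, hwB, -, hadj, huniq⟩ := hF
    have hv : v = inl l.1 := eq_center_of_adj_inr (hwf ▸ hadj)
    obtain ⟨j₁, j₂, hne, h1, h2⟩ := hA.2.1 m₀ hm₀
    have e1 : (inr ⟨idx s m₀, j₁⟩ : CatVert n f) = w := by
      refine huniq _ ?_ h1 trivial
      rw [hv, hl]
      exact adj_leaf' (idx s m₀) j₁
    have e2 : (inr ⟨idx s m₀, j₂⟩ : CatVert n f) = w := by
      refine huniq _ ?_ h2 trivial
      rw [hv, hl]
      exact adj_leaf' (idx s m₀) j₂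
    have := e1.trans e2.symm
    simp only [Sum.inr.injEq, Sigma.mk.inj_iff, heq_eq_eq, true_and] at this
    exact hne this
  · -- the forced vertex is an interior center: impossible
    exfalso
    obtain ⟨m₀, h0, h1, hwf⟩ := hU
    obtain ⟨hvB, hwB, -, hadj, huniq⟩ := hF
    have hsym : (catCycle n f).Adj (inl (idx s m₀)) v := (hwf ▸ hadj).symm
    cases v with
    | inr l =>
      have hc : inl (idx s m₀) = inl l.1 := eq_center_of_adj_inr hsym
      have hfr := hA.2.2 m₀ h0 h1
      obtain ⟨i, j⟩ := l
      have : idx s m₀ = i := Sum.inl.inj hc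
      subst this
      exact hfr.2 j hvB
    | inl a =>
      have hin : ∃ m', m' < L ∧ a = idx s m' := by
        rcases adj_inl_cases hn1 hsym with hb | hb
        · exact ⟨m₀ + 1, by omega, by rw [hb, idx_idx]⟩
        · refine ⟨m₀ - 1, by omega, ?_⟩
          rw [hb, idx_idx, show m₀ + (n - 1) = (m₀ - 1) + n by omega, idx_add_n]
      obtain ⟨m', hm', ha⟩ := hin
      obtain ⟨j₁, j₂, hne, hj1, hj2⟩ := hA.2.1 m' hm'
      have := huniq (inr ⟨idx s m', j₁⟩) (by rw [ha]; exact adj_leaf' (idx s m') j₁) hj1 trivial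
      rw [hwf] at this
      exact Sum.inr_ne_inl this

lemma interior_comp (hn1 : 1 < n) {B : Set (CatVert n f)} {s : Fin n} {L : ℕ}
    (hA : ArcOK B s L) :
    ∀ m, 1 ≤ m → m + 1 < L →
      WhiteComp (catCycle n f) B (inl (idx s m)) = WhiteComp (catCycle n f) B (inl (idx s 1)) := by
  intro m hm
  induction m, hm using Nat.le_induction with
  | base => intro _; rfl
  | succ m hm ih =>
    intro hlt
    have hfm : Fresh B (idx s m) := hA.2.2 m (by omega) (by omega)
    have hfm1 : Fresh B (idx s (m + 1)) := hA.2.2 (m + 1) (by omega) hlt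
    have h1 : WhiteComp (catCycle n f) B (inl (idx s m)) =
        WhiteComp (catCycle n f) B (inl (idx s (m + 1))) :=
      whiteComp_eq_of_adj (adj_succ hn1 s m) hfm.1 hfm1.1
    rw [← h1]
    exact ih (by omega)

lemma comp_subset (hn1 : 1 < n) {B : Set (CatVert n f)} {s : Fin n} {L : ℕ}
    (hA : ArcOK B s L) (hL3 : 3 ≤ L)
    (hBa : (inl (idx s 0) : CatVert n f) ∈ B)
    (hBb : (inl (idx s (L - 1)) : CatVert n f) ∈ B) :
    ∀ x ∈ WhiteComp (catCycle n f) B (inl (idx s 1)),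
      ∃ m, 1 ≤ m ∧ m ≤ L - 2 ∧ ctr x = idx s m := by
  intro x hx
  induction hx with
  | refl => exact ⟨1, le_refl 1, by omega, rfl⟩
  | @tail b c hab hr ih =>
    obtain ⟨m, hm1, hm2, hctr⟩ := ih
    obtain ⟨hadj, hbB, hcB⟩ := hr
    cases b with
    | inl i =>
      have hi : i = idx s m := hctr
      subst hi
      cases c with
      | inr l =>
        have := eq_center_of_adj_inr hadj
        have hl : l.1 = idx s m := (Sum.inl.inj this).symm
        exact ⟨m, hm1, hm2, hl⟩
      | inl a =>
        rcases adj_inl_cases hn1 hadj with hb' | hb'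
        · have ha' : a = idx s (m + 1) := by rw [hb', idx_idx]
          have hsplit : m + 1 ≤ L - 2 ∨ m + 1 = L - 1 := by omega
          rcases hsplit with h | h
          · exact ⟨m + 1, by omega, h, ha'⟩
          · exfalso
            rw [ha', h] at hcB
            exact hcB hBb
        · have ha' : a = idx s (m - 1) := by
            rw [hb', idx_idx, show m + (n - 1) = (m - 1) + n by omega, idx_add_n]
          have hsplit : 1 ≤ m - 1 ∨ m = 1 := by omega
          rcases hsplit with h | h
          · exact ⟨m - 1, h, by omega, ha'⟩
          · exfalso
            rw [ha', h] at hcB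
            exact hcB hBa
    | inr l =>
      have hc : c = inl l.1 := eq_center_of_adj_inr hadj.symm
      refine ⟨m, hm1, hm2, ?_⟩
      rw [hc]
      exact hctr

end CatLower
end ZqGame

namespace ZqGame
namespace CatLower

open Sum

variable {n : ℕ} {f : Fin n → ℕ}

lemma white_of_isWhiteComp {B : Set (CatVert n f)} {W : Set (CatVert n f)}
    (h : IsWhiteComp (catCycle n f) B W) {x : CatVert n f} (hx : x ∈ W) : x ∉ B := by
  obtain ⟨w₀, hw₀, rfl⟩ := h
  exact whiteComp_white hw₀ hx

lemma step3 (hn : 3 ≤ n) {B : Set (CatVert n f)} {s : Fin n} {L : ℕ}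
    {𝒲 : Finset (Set (CatVert n f))} {vf wf : Finset (Set (CatVert n f)) → CatVert n f}
    (hA : ArcOK B s L)
    (hWC : ∀ W ∈ 𝒲, IsWhiteComp (catCycle n f) B W)
    (hcard : 3 ≤ 𝒲.card)
    (hFor : ∀ 𝒮 : Finset (Set (CatVert n f)), 𝒮 ⊆ 𝒲 → 𝒮.Nonempty →
      ForceIn (catCycle n f) B (⋃₀ (𝒮 : Set (Set (CatVert n f)))) (vf 𝒮) (wf 𝒮)) :
    ∃ 𝒮, 𝒮 ⊆ 𝒲 ∧ 𝒮.Nonempty ∧ ArcOK (insert (wf 𝒮) B) s L := by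
  classical
  have hn1 : 1 < n := by omega
  by_contra hno
  push_neg at hno
  -- every possible forced vertex damages the arc
  have hunsafe : ∀ 𝒮 : Finset (Set (CatVert n f)), 𝒮 ⊆ 𝒲 → 𝒮.Nonempty →
      (∃ m, m < L ∧ ∃ l : Σ i : Fin n, Fin (f i), wf 𝒮 = inr l ∧ l.1 = idx s m) ∨
      (∃ m, 0 < m ∧ m + 1 < L ∧ wf 𝒮 = inl (idx s m)) := by
    intro 𝒮 h1 h2
    rcases safe_or_unsafe s L (wf 𝒮) with hS | h | h
    · exact absurd (preserve hA hS) (hno 𝒮 h1 h2)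
    · exact Or.inl h
    · exact Or.inr h
  -- classification of announced components
  have hclass : ∀ W ∈ 𝒲,
      (∃ e, (e = 0 ∨ e = L - 1) ∧ e < L ∧ (inl (idx s e) : CatVert n f) ∈ B ∧
        ∃ j : Fin (f (idx s e)), W = {inr ⟨idx s e, j⟩}) ∨
      (3 ≤ L ∧ W = WhiteComp (catCycle n f) B (inl (idx s 1))) := by
    intro W hW
    have hsub : ({W} : Finset (Set (CatVert n f))) ⊆ 𝒲 := Finset.singleton_subset_iff.mpr hW
    have hne : ({W} : Finset (Set (CatVert n f))).Nonempty := ⟨W, Finset.mem_singleton_self W⟩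
    have hFW := hFor {W} hsub hne
    have hUW : ⋃₀ ((({W} : Finset (Set (CatVert n f))) : Set (Set (CatVert n f)))) = W := by
      simp
    rw [hUW] at hFW
    obtain ⟨hvB, hwB, hwU, hadj, huniq⟩ := hFW
    obtain ⟨w₀, hw₀, hWeq⟩ := hWC W hW
    rcases hunsafe {W} hsub hne with ⟨m₀, hm₀, l, hwf, hl⟩ | ⟨m₀, h0, h1, hwf⟩
    · -- a leaf of an arc center is forced inside `W`
      left
      have hv : vf {W} = inl l.1 := eq_center_of_adj_inr (hwf ▸ hadj)
      have hBc : (inl (idx s m₀) : CatVert n f) ∈ B := by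
        rw [← hl, ← hv]
        exact hvB
      have hend : m₀ = 0 ∨ m₀ = L - 1 := by
        by_contra hcon
        push_neg at hcon
        have hfr := hA.2.2 m₀ (by omega) (by omega)
        exact hfr.1 hBc
      have hxW : (inr l : CatVert n f) ∈ W := hwf ▸ hwU
      have hcompx : WhiteComp (catCycle n f) B (inr l : CatVert n f) = W := by
        rw [hWeq] at hxW ⊢
        exact whiteComp_eq_of_mem hxW
      have hsing : WhiteComp (catCycle n f) B (inr l : CatVert n f) = {inr l} := by
        refine whiteComp_singleton ?_
        intro u hu
        rw [eq_center_of_adj_inr hu.symm, hl]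
        exact hBc
      obtain ⟨i, j⟩ := l
      have hi : i = idx s m₀ := hl
      subst hi
      exact ⟨m₀, hend, hm₀, hBc, j, by rw [← hcompx, hsing]⟩
    · -- an interior center is forced inside `W`
      right
      refine ⟨by omega, ?_⟩
      have hxW : (inl (idx s m₀) : CatVert n f) ∈ W := hwf ▸ hwU
      have h1' : WhiteComp (catCycle n f) B (inl (idx s m₀)) = W := by
        rw [hWeq] at hxW ⊢
        exact whiteComp_eq_of_mem hxW
      rw [← h1']
      exact (interior_comp hn1 hA m₀ (by omega) h1).symm ▸ rfl
  -- three pairwise distinct announced components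
  obtain ⟨W₁, hW₁, W₂, hW₂, W₃, hW₃, h12, h13, h23⟩ := three_distinct hcard
  -- Case (a): two distinct singleton-leaf components at the same (blue) arc center.
  by_cases hcasea : ∃ e, e < L ∧ ∃ j₁ j₂ : Fin (f (idx s e)), j₁ ≠ j₂ ∧
      ({(inr ⟨idx s e, j₁⟩ : CatVert n f)} : Set (CatVert n f)) ∈ 𝒲 ∧
      ({(inr ⟨idx s e, j₂⟩ : CatVert n f)} : Set (CatVert n f)) ∈ 𝒲
  · obtain ⟨e, heL, j₁, j₂, hjj, hm1, hm2⟩ := hcasea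
    set ℓ₁ : CatVert n f := inr ⟨idx s e, j₁⟩ with hℓ₁
    set ℓ₂ : CatVert n f := inr ⟨idx s e, j₂⟩ with hℓ₂
    have hℓne : ℓ₁ ≠ ℓ₂ := by
      simp only [hℓ₁, hℓ₂, ne_eq, Sum.inr.injEq, Sigma.mk.inj_iff, heq_eq_eq, true_and]
      exact hjj
    set 𝒮 : Finset (Set (CatVert n f)) := {({ℓ₁} : Set (CatVert n f)), ({ℓ₂} : Set (CatVert n f))} with h𝒮
    have hsub : 𝒮 ⊆ 𝒲 := by
      intro X hX
      rw [h𝒮, Finset.mem_insert, Finset.mem_singleton] at hX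
      rcases hX with rfl | rfl
      · exact hm1
      · exact hm2
    have hne : 𝒮.Nonempty := ⟨{ℓ₁}, by simp [h𝒮]⟩
    have hFS := hFor 𝒮 hsub hne
    have hU : ⋃₀ ((𝒮 : Set (Set (CatVert n f)))) = ({ℓ₁, ℓ₂} : Set (CatVert n f)) := by
      simp [h𝒮]
      exact Set.pair_comm ℓ₂ ℓ₁
    rw [hU] at hFS
    obtain ⟨hvB, hwB, hwU, hadj, huniq⟩ := hFS
    have hw1 : ℓ₁ ∉ B := white_of_isWhiteComp (hWC _ hm1) rfl
    have hw2 : ℓ₂ ∉ B := white_of_isWhiteComp (hWC _ hm2) rfl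
    rcases hwU with h | h
    · -- wf 𝒮 = ℓ₁
      have hv : vf 𝒮 = inl (idx s e) := eq_center_of_adj_inr (h ▸ hadj)
      have := huniq ℓ₂ (by rw [hv]; exact adj_leaf' (idx s e) j₂) hw2 (Or.inr rfl)
      rw [h] at this
      exact hℓne this.symm
    · -- wf 𝒮 = ℓ₂
      have h' : wf 𝒮 = ℓ₂ := h
      have hv : vf 𝒮 = inl (idx s e) := eq_center_of_adj_inr (h' ▸ hadj)
      have := huniq ℓ₁ (by rw [hv]; exact adj_leaf' (idx s e) j₁) hw1 (Or.inl rfl)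
      rw [h'] at this
      exact hℓne this
  · -- Case (b): representatives of all three classes must exist.
    -- helper: a Type-1 component at endpoint e determines e < L, blueness and shape
    have hnotwo : ∀ (Wa Wb : Set (CatVert n f)), Wa ∈ 𝒲 → Wb ∈ 𝒲 → Wa ≠ Wb → ∀ e, e < L →
        (∃ j : Fin (f (idx s e)), Wa = {inr ⟨idx s e, j⟩}) →
        (∃ j : Fin (f (idx s e)), Wb = {inr ⟨idx s e, j⟩}) → False := by
      rintro Wa Wb ha hb hab e heL ⟨ja, hja⟩ ⟨jb, hjb⟩
      have hjj : ja ≠ jb := by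
        rintro rfl
        exact hab (hja.trans hjb.symm)
      exact hcasea ⟨e, heL, ja, jb, hjj, hja ▸ ha, hjb ▸ hb⟩
    -- there is a type-2 (interior) component
    have hT2 : ∃ W ∈ 𝒲, 3 ≤ L ∧ W = WhiteComp (catCycle n f) B (inl (idx s 1)) := by
      by_contra hno2
      push_neg at hno2
      have g : ∀ W ∈ 𝒲, ∃ e, (e = 0 ∨ e = L - 1) ∧ e < L ∧
          (inl (idx s e) : CatVert n f) ∈ B ∧ ∃ j : Fin (f (idx s e)), W = {inr ⟨idx s e, j⟩} := by
        intro W hW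
        rcases hclass W hW with h | ⟨hL3, h⟩
        · exact h
        · exact absurd h (hno2 W hW hL3)
      obtain ⟨e₁, he₁, hL₁, hB₁, hj₁⟩ := g W₁ hW₁
      obtain ⟨e₂, he₂, hL₂, hB₂, hj₂⟩ := g W₂ hW₂
      obtain ⟨e₃, he₃, hL₃, hB₃, hj₃⟩ := g W₃ hW₃
      have : e₁ = e₂ ∨ e₁ = e₃ ∨ e₂ = e₃ := by omega
      rcases this with h | h | h
      · subst h; exact hnotwo W₁ W₂ hW₁ hW₂ h12 e₁ hL₁ hj₁ hj₂
      · subst h; exact hnotwo W₁ W₃ hW₁ hW₃ h13 e₁ hL₁ hj₁ hj₃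
      · subst h; exact hnotwo W₂ W₃ hW₂ hW₃ h23 e₂ hL₂ hj₂ hj₃
    obtain ⟨Wc, hWc, hL3, hWceq⟩ := hT2
    -- type-1 representatives at both endpoints
    have hT1 : ∀ e', (e' = 0 ∨ e' = L - 1) →
        (∃ W ∈ 𝒲, (inl (idx s e') : CatVert n f) ∈ B ∧
          ∃ j : Fin (f (idx s e')), W = {inr ⟨idx s e', j⟩}) := by
      intro e' he'
      by_contra hno1
      push_neg at hno1
      have g : ∀ W ∈ 𝒲, (∃ e, (e = 0 ∨ e = L - 1) ∧ e ≠ e' ∧ e < L ∧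
          (inl (idx s e) : CatVert n f) ∈ B ∧ ∃ j : Fin (f (idx s e)), W = {inr ⟨idx s e, j⟩}) ∨
          W = WhiteComp (catCycle n f) B (inl (idx s 1)) := by
        intro W hW
        rcases hclass W hW with ⟨e, he, heL, hB, j, hj⟩ | ⟨_, h⟩
        · by_cases hee : e = e'
          · subst hee
            exact absurd hj (hno1 W hW hB j)
          · exact Or.inl ⟨e, he, hee, heL, hB, j, hj⟩
        · exact Or.inr h
      -- now among three distinct W's, at most one is type-2, and the type-1s share
      -- the unique remaining endpoint value, contradiction
      have key : ∀ (Wa Wb : Set (CatVert n f)), Wa ∈ 𝒲 → Wb ∈ 𝒲 → Wa ≠ Wb →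
          (∃ e, (e = 0 ∨ e = L - 1) ∧ e ≠ e' ∧ e < L ∧
            (inl (idx s e) : CatVert n f) ∈ B ∧ ∃ j : Fin (f (idx s e)), Wa = {inr ⟨idx s e, j⟩}) →
          (∃ e, (e = 0 ∨ e = L - 1) ∧ e ≠ e' ∧ e < L ∧
            (inl (idx s e) : CatVert n f) ∈ B ∧ ∃ j : Fin (f (idx s e)), Wb = {inr ⟨idx s e, j⟩}) →
          False := by
        rintro Wa Wb ha hb hab ⟨ea, hea, hea', heaL, _, hja⟩ ⟨eb, heb, heb', hebL, _, hjb⟩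
        have : ea = eb := by omega
        subst this
        exact hnotwo Wa Wb ha hb hab ea heaL hja hjb
      rcases g W₁ hW₁ with g₁ | g₁ <;> rcases g W₂ hW₂ with g₂ | g₂ <;>
        rcases g W₃ hW₃ with g₃ | g₃
      · exact key W₁ W₂ hW₁ hW₂ h12 g₁ g₂
      · exact key W₁ W₂ hW₁ hW₂ h12 g₁ g₂
      · exact key W₁ W₃ hW₁ hW₃ h13 g₁ g₃
      · exact h23 (g₂.trans g₃.symm)
      · exact key W₂ W₃ hW₂ hW₃ h23 g₂ g₃
      · exact h13 (g₁.trans g₃.symm)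
      · exact h12 (g₁.trans g₂.symm)
      · exact h12 (g₁.trans g₂.symm)
    obtain ⟨Wa, hWa, hBa, ja, hWaeq⟩ := hT1 0 (Or.inl rfl)
    obtain ⟨Wb, hWb, hBb, jb, hWbeq⟩ := hT1 (L - 1) (Or.inr rfl)
    -- Final contradiction: announce the two endpoint leaves together with the
    -- interior component; no Blue vertex can force in the union.
    set ℓ₁ : CatVert n f := inr ⟨idx s 0, ja⟩ with hℓ₁
    set ℓ₂ : CatVert n f := inr ⟨idx s (L - 1), jb⟩ with hℓ₂
    set W₀ : Set (CatVert n f) := WhiteComp (catCycle n f) B (inl (idx s 1)) with hW₀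
    set 𝒮 : Finset (Set (CatVert n f)) := {Wa, Wb, Wc} with h𝒮
    have hsub : 𝒮 ⊆ 𝒲 := by
      intro X hX
      rw [h𝒮, Finset.mem_insert, Finset.mem_insert, Finset.mem_singleton] at hX
      rcases hX with rfl | rfl | rfl
      · exact hWa
      · exact hWb
      · exact hWc
    have hnes : 𝒮.Nonempty := ⟨Wa, by simp [h𝒮]⟩
    have hFS := hFor 𝒮 hsub hnes
    have hUn : ⋃₀ ((𝒮 : Set (Set (CatVert n f)))) =
        ({ℓ₁} : Set (CatVert n f)) ∪ (({ℓ₂} : Set (CatVert n f)) ∪ W₀) := by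
      rw [h𝒮]
      push_cast
      rw [Set.sUnion_insert, Set.sUnion_insert, Set.sUnion_singleton, hWaeq, hWbeq, hWceq]
    rw [hUn] at hFS
    obtain ⟨hvB, hwB, hwU, hadj, huniq⟩ := hFS
    have hw1 : ℓ₁ ∉ B := white_of_isWhiteComp (hWC Wa hWa) (by rw [hWaeq]; rfl)
    have hw2 : ℓ₂ ∉ B := white_of_isWhiteComp (hWC Wb hWb) (by rw [hWbeq]; rfl)
    have hfr1 : Fresh B (idx s 1) := hA.2.2 1 one_pos (by omega)
    have hfr2 : Fresh B (idx s (L - 2)) := hA.2.2 (L - 2) (by omega) (by omega)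
    have hmem1 : (inl (idx s 1) : CatVert n f) ∈ W₀ := whiteComp_refl _ _ _
    have hmem2 : (inl (idx s (L - 2)) : CatVert n f) ∈ W₀ := by
      rw [hW₀, ← interior_comp hn1 hA (L - 2) (by omega) (by omega)]
      exact whiteComp_refl _ _ _
    have hadj01 : (catCycle n f).Adj (inl (idx s 0)) (inl (idx s 1)) := adj_succ hn1 s 0
    have hadj2 : (catCycle n f).Adj (inl (idx s (L - 1))) (inl (idx s (L - 2))) := by
      have h : (catCycle n f).Adj (inl (idx s (L - 2))) (inl (idx s (L - 2 + 1))) :=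
        adj_succ hn1 s (L - 2)
      rw [show L - 2 + 1 = L - 1 by omega] at h
      exact h.symm
    rcases hwU with h | h | h
    · -- wf 𝒮 = ℓ₁ : but inl (idx s 1) is also a white neighbour of the forcer in the union
      have hx : wf 𝒮 = ℓ₁ := h
      have hv : vf 𝒮 = inl (idx s 0) := by
        rw [hx] at hadj
        exact eq_center_of_adj_inr hadj
      have := huniq (inl (idx s 1)) (by rw [hv]; exact hadj01) hfr1.1 (Or.inr (Or.inr hmem1))
      rw [hx] at this
      exact Sum.inl_ne_inr this
    · -- wf 𝒮 = ℓ₂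
      have hx : wf 𝒮 = ℓ₂ := h
      have hv : vf 𝒮 = inl (idx s (L - 1)) := by
        rw [hx] at hadj
        exact eq_center_of_adj_inr hadj
      have := huniq (inl (idx s (L - 2))) (by rw [hv]; exact hadj2) hfr2.1 (Or.inr (Or.inr hmem2))
      rw [hx] at this
      exact Sum.inl_ne_inr this
    · -- wf 𝒮 lies in the interior component
      obtain ⟨m, hm1, hm2, hctr⟩ := comp_subset hn1 hA hL3 hBa hBb (wf 𝒮) h
      cases hx : wf 𝒮 with
      | inr l =>
        rw [hx] at hctr hadj
        have hl : l.1 = idx s m := hctr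
        have hv : vf 𝒮 = inl l.1 := eq_center_of_adj_inr hadj
        rw [hv, hl] at hvB
        exact (hA.2.2 m (by omega) (by omega)).1 hvB
      | inl i =>
        rw [hx] at hctr hadj
        have hi : i = idx s m := hctr
        subst hi
        cases hy : vf 𝒮 with
        | inr l =>
          rw [hy] at hadj hvB
          have hc : (inl (idx s m) : CatVert n f) = inl l.1 := eq_center_of_adj_inr hadj.symm
          obtain ⟨i', j'⟩ := l
          have : idx s m = i' := Sum.inl.inj hc
          subst this
          exact (hA.2.2 m (by omega) (by omega)).2 j' hvB
        | inl a =>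
          rw [hy] at hadj hvB
          rcases adj_inl_cases hn1 hadj.symm with hb' | hb'
          · have ha' : a = idx s (m + 1) := by rw [hb', idx_idx]
            have hsplit : m + 2 < L ∨ m + 1 = L - 1 := by omega
            rcases hsplit with hcase | hcase
            · rw [ha'] at hvB
              exact (hA.2.2 (m + 1) (by omega) (by omega)).1 hvB
            · have hveq : a = idx s (L - 1) := by rw [ha', hcase]
              have := huniq ℓ₂ (by rw [hy, hveq]; exact adj_leaf' (idx s (L - 1)) jb) hw2
                (Or.inr (Or.inl rfl))
              rw [hx] at this
              exact Sum.inr_ne_inl this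
          · have ha' : a = idx s (m - 1) := by
              rw [hb', idx_idx, show m + (n - 1) = (m - 1) + n by omega, idx_add_n]
            have hsplit : 0 < m - 1 ∨ m = 1 := by omega
            rcases hsplit with hcase | hcase
            · rw [ha'] at hvB
              exact (hA.2.2 (m - 1) hcase (by omega)).1 hvB
            · have hveq : a = idx s 0 := by rw [ha', hcase]
              have := huniq ℓ₁ (by rw [hy, hveq]; exact adj_leaf' (idx s 0) ja) hw1
                (Or.inl rfl)
              rw [hx] at this
              exact Sum.inr_ne_inl this


end CatLower
end ZqGame

namespace ZqGame
namespace CatLower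

open Sum

variable {n : ℕ} {f : Fin n → ℕ}

/-- Main potential lemma: if Blue wins with `t` tokens, every protected arc has
length at most `2 ^ t - 1`. -/
lemma main (hn : 3 ≤ n) {B : Set (CatVert n f)} {t : ℕ}
    (h : Win (catCycle n f) 2 B t) : ∀ s L, ArcOK B s L → L ≤ 2 ^ t - 1 := by
  have hn1 : 1 < n := by omega
  induction h with
  | all B t hall =>
    intro s L hA
    rcases Nat.eq_zero_or_pos L with rfl | hL
    · exact Nat.zero_le _
    · obtain ⟨j, j', _, hj, _⟩ := hA.2.1 0 hL
      exact absurd (hall _) hj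
  | rule1 B t v hw ih =>
    intro s L hA
    obtain ⟨s', L', hA', hL⟩ := step1 hA v
    have h1 := ih s' L' hA'
    have h2 : 1 ≤ 2 ^ t := Nat.one_le_two_pow
    have h3 : 2 ^ (t + 1) = 2 * 2 ^ t := by ring
    omega
  | rule2 B t v w hf hw ih =>
    exact fun s L hA => ih s L (step2 hn1 hf hA)
  | rule3 B t 𝒲 vf wf hWC hcard hFor hw ih =>
    intro s L hA
    obtain ⟨𝒮, h1, h2, hA'⟩ := step3 hn hA hWC hcard hFor
    exact ih 𝒮 h1 h2 s L hA'

/-- After the first (necessarily paid) move, there is a protected arc of length `n - 1`. -/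
lemma arc_init (hn : 3 ≤ n) (hf2 : ∀ i, 2 ≤ f i) (v : CatVert n f) :
    ArcOK (insert v (∅ : Set (CatVert n f))) (idx (ctr v) 1) (n - 1) := by
  have key : ∀ m, m < n - 1 → idx (idx (ctr v) 1) m ≠ ctr v := by
    intro m hm h
    rw [idx_idx] at h
    have h0 : idx (ctr v) (1 + m) = idx (ctr v) 0 := by rw [idx_zero]; exact h
    have := idx_inj (by omega) (by omega) h0
    omega
  have hnotmem : ∀ (x : CatVert n f), ctr x ≠ ctr v → x ∉ insert v (∅ : Set (CatVert n f)) := by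
    intro x hx hmem
    rcases Set.mem_insert_iff.mp hmem with rfl | hc
    · exact hx rfl
    · exact hc
  refine ⟨by omega, fun m hm => ?_, fun m h0 h1 => ?_⟩
  · have h2 : 2 ≤ f (idx (idx (ctr v) 1) m) := hf2 _
    exact ⟨⟨0, by omega⟩, ⟨1, by omega⟩, by simp [Fin.ext_iff],
      hnotmem _ (key m hm), hnotmem _ (key m hm)⟩
  · exact ⟨hnotmem _ (key m (by omega)), fun j => hnotmem _ (key m (by omega))⟩

/-- Any winning budget from the empty position satisfies `1 ≤ t` and `n ≤ 2 ^ (t - 1)`. -/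
lemma start (hn : 3 ≤ n) (hf2 : ∀ i, 2 ≤ f i) :
    ∀ {B : Set (CatVert n f)} {t : ℕ}, Win (catCycle n f) 2 B t → B = ∅ →
      1 ≤ t ∧ n ≤ 2 ^ (t - 1) := by
  intro B t h
  cases h with
  | all B t hall =>
    intro hB
    exfalso
    have := hall (inl ⟨0, by omega⟩)
    rw [hB] at this
    exact this
  | rule1 B t v hw =>
    intro hB
    subst hB
    refine ⟨by omega, ?_⟩
    have h1 := main hn hw (idx (ctr v) 1) (n - 1) (arc_init hn hf2 v)
    have h2 : 1 ≤ 2 ^ t := Nat.one_le_two_pow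
    have h3 : t + 1 - 1 = t := by omega
    rw [h3]
    omega
  | rule2 B t v w hf hw =>
    intro hB
    exfalso
    have := hf.1
    rw [hB] at this
    exact this
  | rule3 B t 𝒲 vf wf hWC hcard hFor hw =>
    intro hB
    exfalso
    obtain ⟨W, hW⟩ := Finset.card_pos.mp (show 0 < 𝒲.card by omega)
    have := (hFor {W} (Finset.singleton_subset_iff.mpr hW) ⟨W, Finset.mem_singleton_self W⟩).1
    rw [hB] at this
    exact this

end CatLower
end ZqGame


/-- Lower bound for `q = 2` on caterpillar cycles: if `C_{n,k}` is obtained from the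
cycle `C_n` (`n ≥ 3`) by attaching between `2` and `k` pendant leaves to each cycle
vertex (`k ≥ 2`), then `log₂ n + 1 ≤ Z_2(C_{n,k})`. -/
theorem Z2_catCycle_lower (n k : ℕ) (hn : 3 ≤ n) (hk : 2 ≤ k) (f : Fin n → ℕ)
    (hf : ∀ i, 2 ≤ f i ∧ f i ≤ k) :
    Real.logb 2 n + 1 ≤ (ZqGame.Zq (ZqGame.catCycle n f) 2 : ℝ) := by

  classical
  have hf2 : ∀ i, 2 ≤ f i := fun i => (hf i).1
  set G := ZqGame.catCycle n f with hG
  have hne : {t | ZqGame.Win G 2 (∅ : Set (ZqGame.CatVert n f)) t}.Nonempty :=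
    ⟨(Finset.univ : Finset (ZqGame.CatVert n f)).card,
      ZqGame.CatLower.winAll G 2 Finset.univ ∅ (fun v hv => absurd (Finset.mem_univ v) hv)⟩
  have hmem : ZqGame.Win G 2 (∅ : Set (ZqGame.CatVert n f)) (ZqGame.Zq G 2) := by
    have := Nat.sInf_mem hne
    exact this
  obtain ⟨ht1, hineq⟩ := ZqGame.CatLower.start hn hf2 hmem rfl
  set t := ZqGame.Zq G 2 with ht
  have hlogb : Real.logb 2 n ≤ ((t - 1 : ℕ) : ℝ) := by
    have hcast : ((n : ℝ)) ≤ ((2 : ℝ)) ^ (t - 1 : ℕ) := by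
      exact_mod_cast hineq
    calc Real.logb 2 n ≤ Real.logb 2 (((2 : ℝ)) ^ (t - 1 : ℕ)) :=
          Real.logb_le_logb_of_le (by norm_num) (by positivity) hcast
      _ = ((t - 1 : ℕ) : ℝ) := by
          rw [Real.logb_pow, Real.logb_self_eq_one (by norm_num)]
          ring
  have hcast1 : ((t - 1 : ℕ) : ℝ) = (t : ℝ) - 1 := by
    rw [Nat.cast_sub ht1, Nat.cast_one]
  rw [hcast1] at hlogb
  linarith
end
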